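/- arXiv:2109.12515 — 3 statements merged into one kernel-verified Lean document; each statement's English description precedes it below -/
import Mathlib

section
/- Let Δ ⊆ ℝⁿ be nonempty, compact, and convex, and let F: ℝⁿ → ℝⁿ be continuous. Then VI(F, Δ) has at least one solution, i.e., there exists x* ∈ Δ with F(x*)ᵀ(x − x*) ≥ 0 for all x ∈ Δ. -/
namespace VIB
open Finset

def look (b : List ℕ) (j : ℕ) : ℕ := b.getD j 0

def V (b l : List ℕ) (k : ℕ) : ℕ → ℕ := fun j => look b j + if j ∈ l.take k then 1 else 0

def lists : ℕ → ℕ → Finset (List ℕ)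
  | 0, _ => {[]}
  | n+1, N => ((Finset.range N) ×ˢ lists n N).image fun p => p.1 :: p.2

lemma mem_lists {n N : ℕ} {b : List ℕ} :
    b ∈ lists n N ↔ b.length = n ∧ ∀ a ∈ b, a < N := by
  induction n generalizing b with
  | zero =>
    constructor
    · intro h
      simp only [lists, mem_singleton] at h
      subst h; simp
    · rintro ⟨h, -⟩
      rw [List.length_eq_zero_iff] at h
      simp [lists, h]
  | succ n ih =>
    simp only [lists, mem_image, mem_product, Prod.exists, mem_range]
    constructor
    · rintro ⟨a, t, ⟨ha, ht⟩, rfl⟩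
      obtain ⟨h1, h2⟩ := ih.1 ht
      refine ⟨by simp [h1], ?_⟩
      intro x hx
      rcases List.mem_cons.1 hx with rfl | hx
      · exact ha
      · exact h2 x hx
    · rintro ⟨hlen, hlt⟩
      match b, hlen with
      | a :: t, hlen =>
        exact ⟨a, t, ⟨hlt a (List.mem_cons_self), ih.2 ⟨Nat.succ_injective hlen,
          fun x hx => hlt x (List.mem_cons_of_mem _ hx)⟩⟩, rfl⟩

def perms (n : ℕ) : Finset (List ℕ) := (List.range n).permutations.toFinset

lemma mem_perms {n : ℕ} {l : List ℕ} : l ∈ perms n ↔ l.Perm (List.range n) := by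
  simp [perms, List.mem_permutations]

noncomputable def Cpl (n N : ℕ) (lab : (ℕ → ℕ) → ℕ) : Finset (List ℕ × List ℕ) :=
  ((lists n N) ×ˢ (perms n)).filter fun p =>
    (range (n+1)).image (fun k => lab (V p.1 p.2 k)) = range (n+1)

lemma doors_parity (m : ℕ) (hm : 0 < m) (g : ℕ → ℕ) (hg : ∀ k, k < m → g k < m) :
    ((((range m).filter fun k => ((range m).erase k).image g = range (m-1)).card : ZMod 2))
      = if (range m).image g = range m then 1 else 0 := by
  by_cases hc : (range m).image g = range m
  · rw [if_pos hc]
    have hinj : Set.InjOn g (range m) := by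
      apply Finset.injOn_of_card_image_eq
      rw [hc]
    have hmem : m - 1 ∈ (range m).image g := by
      rw [hc, mem_range]; omega
    obtain ⟨k₀, hk₀, hgk₀⟩ := mem_image.1 hmem
    have hfilter : (range m).filter
        (fun k => ((range m).erase k).image g = range (m-1)) = {k₀} := by
      apply Finset.ext
      intro k
      simp only [mem_filter, mem_singleton]
      constructor
      · rintro ⟨hk, hdoor⟩
        by_contra hne
        have h1 : k₀ ∈ (range m).erase k := Finset.mem_erase.2 ⟨fun h => hne h.symm, hk₀⟩
        have h2 : (m-1) ∈ ((range m).erase k).image g := mem_image.2 ⟨k₀, h1, hgk₀⟩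
        rw [hdoor, mem_range] at h2
        omega
      · rintro rfl
        refine ⟨hk₀, ?_⟩
        apply Finset.ext
        intro y
        simp only [mem_image, mem_range]
        constructor
        · rintro ⟨j, hj, rfl⟩
          obtain ⟨hj1, hj2⟩ := Finset.mem_erase.1 hj
          have h3 : g j < m := hg j (mem_range.1 hj2)
          have h4 : g j ≠ m - 1 := by
            intro h
            exact hj1 (hinj (Finset.mem_coe.2 hj2) (Finset.mem_coe.2 hk₀) (h.trans hgk₀.symm))
          omega
        · intro hy
          have h5 : y ∈ (range m).image g := by rw [hc, mem_range]; omega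
          obtain ⟨j, hj, rfl⟩ := mem_image.1 h5
          refine ⟨j, Finset.mem_erase.2 ⟨?_, hj⟩, rfl⟩
          rintro rfl
          omega
    rw [hfilter]; simp
  · rw [if_neg hc]
    rcases Finset.eq_empty_or_nonempty ((range m).filter
        (fun k => ((range m).erase k).image g = range (m-1))) with he | ⟨k₀, hk₀⟩
    · rw [he]; simp
    rw [mem_filter] at hk₀
    obtain ⟨hk₀r, hdoor₀⟩ := hk₀
    have hinj : Set.InjOn g ((range m).erase k₀) := by
      apply Finset.injOn_of_card_image_eq
      rw [hdoor₀, Finset.card_erase_of_mem hk₀r]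
      simp
    have Himg : (range m).image g = range (m-1) := by
      have hins : (range m).image g = insert (g k₀) (((range m).erase k₀).image g) := by
        rw [← Finset.image_insert, Finset.insert_erase hk₀r]
      have hgk₀ : g k₀ ∈ range (m-1) := by
        by_contra h
        apply hc
        rw [hins, hdoor₀]
        have h6 : g k₀ < m := hg _ (mem_range.1 hk₀r)
        have h7 : g k₀ = m - 1 := by rw [mem_range] at h; omega
        rw [h7]
        apply Finset.ext; intro y
        simp only [mem_insert, mem_range]
        omega
      rw [hins, hdoor₀, Finset.insert_eq_self.2 hgk₀]
    have hgk₀ : g k₀ ∈ range (m-1) := by rw [← Himg]; exact mem_image_of_mem g hk₀r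
    have h8 : g k₀ ∈ ((range m).erase k₀).image g := by rw [hdoor₀]; exact hgk₀
    obtain ⟨k₁, hk₁, hgk₁⟩ := mem_image.1 h8
    have hk₁ne : k₁ ≠ k₀ := (Finset.mem_erase.1 hk₁).1
    have hk₁r : k₁ ∈ range m := (Finset.mem_erase.1 hk₁).2
    have hfilter : (range m).filter
        (fun k => ((range m).erase k).image g = range (m-1)) = {k₀, k₁} := by
      apply Finset.ext
      intro k
      simp only [mem_filter, mem_insert, mem_singleton]
      constructor
      · rintro ⟨hk, hdoor⟩
        by_contra hne
        push_neg at hne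
        have hkek₀ : k ∈ (range m).erase k₀ := Finset.mem_erase.2 ⟨hne.1, hk⟩
        have hgkm : g k ∈ range (m-1) := by rw [← hdoor₀]; exact mem_image_of_mem g hkek₀
        have h9 : g k ∈ ((range m).erase k).image g := by rw [hdoor]; exact hgkm
        obtain ⟨j, hj, hgj⟩ := mem_image.1 h9
        have hjne : j ≠ k := (Finset.mem_erase.1 hj).1
        have hjr : j ∈ range m := (Finset.mem_erase.1 hj).2
        rcases eq_or_ne j k₀ with rfl | hjk₀
        · -- g k = g j(=k₀) = g k₁, with k, k₁ ∈ erase j, injective → k = k₁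
          have heq : g k = g k₁ := by rw [hgk₁, hgj]
          exact hne.2 (hinj (Finset.mem_coe.2 hkek₀) (Finset.mem_coe.2 hk₁) heq)
        · have hjj : j ∈ (range m).erase k₀ := Finset.mem_erase.2 ⟨hjk₀, hjr⟩
          exact hjne (hinj (Finset.mem_coe.2 hjj) (Finset.mem_coe.2 hkek₀) hgj)
      · intro hk
        rcases hk with rfl | rfl
        · exact ⟨hk₀r, hdoor₀⟩
        · refine ⟨hk₁r, ?_⟩
          apply Finset.ext
          intro y
          constructor
          · intro hy
            obtain ⟨j, hj, rfl⟩ := mem_image.1 hy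
            obtain ⟨hjne, hjr⟩ := Finset.mem_erase.1 hj
            rcases eq_or_ne j k₀ with rfl | hjk₀
            · exact hgk₀
            · rw [← hdoor₀]
              exact mem_image_of_mem g (Finset.mem_erase.2 ⟨hjk₀, hjr⟩)
          · intro hy
            rw [← hdoor₀] at hy
            obtain ⟨j, hj, rfl⟩ := mem_image.1 hy
            rcases eq_or_ne j k with rfl | hjk₁
            · rw [hgk₁]
              exact mem_image_of_mem g (Finset.mem_erase.2 ⟨hk₁ne.symm, hk₀r⟩)
            · exact mem_image_of_mem g
                (Finset.mem_erase.2 ⟨hjk₁, (Finset.mem_erase.1 hj).2⟩)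
    rw [hfilter]
    rw [Finset.card_insert_of_notMem (by simpa using hk₁ne.symm), Finset.card_singleton]
    decide

lemma card_modEq_fixed {α : Type*} [DecidableEq α] (s : Finset α) (g : α → α)
    (hmem : ∀ a ∈ s, g a ∈ s) (hinv : ∀ a ∈ s, g (g a) = a) :
    ((s.card : ZMod 2)) = ((s.filter fun a => g a = a).card : ZMod 2) := by
  classical
  have hsplit : s.card = (s.filter fun a => g a = a).card
      + (s.filter fun a => ¬ g a = a).card :=
    (Finset.card_filter_add_card_filter_not _).symm
  have hrest : (((s.filter fun a => ¬ g a = a).card : ZMod 2)) = 0 := by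
    have h : ∑ _x ∈ (s.filter fun a => ¬ g a = a), (1 : ZMod 2) = 0 := by
      apply Finset.sum_involution (fun a _ => g a)
      · intro a _; decide
      · intro a ha _
        exact (Finset.mem_filter.1 ha).2
      · intro a ha
        rw [Finset.mem_filter] at ha ⊢
        refine ⟨hmem a ha.1, ?_⟩
        rw [hinv a ha.1]
        exact fun h => ha.2 h.symm
      · intro a ha; exact hinv a (Finset.mem_filter.1 ha).1
    simpa using h
  rw [hsplit]
  push_cast
  rw [hrest, add_zero]


def swapAdj (l : List ℕ) (k : ℕ) : List ℕ :=
  l.take (k-1) ++ [l.getD k 0, l.getD (k-1) 0] ++ l.drop (k+1)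

def incr (b : List ℕ) (j : ℕ) : List ℕ := b.set j (look b j + 1)
def decr (b : List ℕ) (j : ℕ) : List ℕ := b.set j (look b j - 1)

lemma look_set (b : List ℕ) (j i v : ℕ) (hj : j < b.length) :
    look (b.set j v) i = if i = j then v else look b i := by
  unfold look
  rw [List.getD_eq_getElem?_getD, List.getD_eq_getElem?_getD, List.getElem?_set]
  rcases eq_or_ne i j with rfl | hne
  · simp [hj]
  · simp [hne, Ne.symm hne]

lemma set_look_self (b : List ℕ) (j : ℕ) : b.set j (look b j) = b := by
  apply List.ext_getElem?
  intro i
  rw [List.getElem?_set]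
  rcases eq_or_ne j i with rfl | hne
  · rw [if_pos rfl]
    rcases Nat.lt_or_ge j b.length with h | h
    · rw [if_pos h]
      unfold look
      rw [List.getD_eq_getElem?_getD, List.getElem?_eq_getElem h]
      rfl
    · rw [if_neg (by omega), List.getElem?_eq_none (by omega)]
  · simp [hne]

lemma incr_decr (b : List ℕ) (j : ℕ) (h : 1 ≤ look b j) :
    incr (decr b j) j = b := by
  unfold incr decr
  rcases Nat.lt_or_ge j b.length with hj | hj
  · rw [look_set _ _ _ _ hj, if_pos rfl, List.set_set, Nat.sub_add_cancel h, set_look_self]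
  · unfold look at h ⊢
    rw [List.getD_eq_getElem?_getD, List.getElem?_eq_none (by omega)] at h
    simp at h
lemma decr_incr (b : List ℕ) (j : ℕ) (hj : j < b.length) :
    decr (incr b j) j = b := by
  unfold incr decr
  rw [look_set _ _ _ _ hj, if_pos rfl, List.set_set, Nat.add_sub_cancel, set_look_self]

lemma list_decomp (l : List ℕ) (k : ℕ) (h1 : 1 ≤ k) (h2 : k < l.length) :
    l = l.take (k-1) ++ [l.getD (k-1) 0, l.getD k 0] ++ l.drop (k+1) := by
  conv_lhs => rw [← List.take_append_drop (k-1) l]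
  rw [List.append_assoc]
  congr 1
  rw [List.drop_eq_getElem_cons (show k-1 < l.length by omega)]
  rw [List.getD_eq_getElem _ _ (show k-1 < l.length by omega)]
  congr 1
  have hk : k - 1 + 1 = k := by omega
  rw [hk, List.drop_eq_getElem_cons h2, List.getD_eq_getElem _ _ h2]
  rfl

lemma swapAdj_perm (l : List ℕ) (k : ℕ) (h1 : 1 ≤ k) (h2 : k < l.length) :
    (swapAdj l k).Perm l := by
  conv_rhs => rw [list_decomp l k h1 h2]
  unfold swapAdj
  rw [List.append_assoc, List.append_assoc]
  apply List.Perm.append_left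
  exact List.Perm.swap _ _ _

lemma swapAdj_length (l : List ℕ) (k : ℕ) (h1 : 1 ≤ k) (h2 : k < l.length) :
    (swapAdj l k).length = l.length := (swapAdj_perm l k h1 h2).length_eq

lemma take_swapAdj_le (l : List ℕ) (k i : ℕ) (h1 : 1 ≤ k) (h2 : k < l.length) (hi : i ≤ k - 1) :
    (swapAdj l k).take i = l.take i := by
  unfold swapAdj
  rw [List.append_assoc, List.take_append,
    List.take_take, min_eq_left hi,
    show i - (l.take (k-1)).length = 0 by rw [List.length_take]; omega,
    List.take_zero, List.append_nil]

lemma mem_take_mid (A C : List ℕ) (c d x i m : ℕ) (hA : A.length = m) (hi : m + 2 ≤ i) :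
    x ∈ (A ++ [c, d] ++ C).take i ↔
      x ∈ A ∨ x = c ∨ x = d ∨ x ∈ C.take (i - (m + 2)) := by
  subst hA
  rw [List.take_append, List.take_append,
    List.take_of_length_le (show A.length ≤ i by omega),
    List.take_of_length_le (show ([c,d] : List ℕ).length ≤ i - A.length by simp; omega)]
  have h9 : i - (A ++ [c, d]).length = i - (A.length + 2) := by simp
  rw [h9]
  simp only [List.mem_append, List.mem_cons, List.not_mem_nil, or_false]
  tauto

lemma mem_take_swapAdj_gt (l : List ℕ) (k i x : ℕ) (h1 : 1 ≤ k) (h2 : k < l.length)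
    (hi : k + 1 ≤ i) : (x ∈ (swapAdj l k).take i ↔ x ∈ l.take i) := by
  have hlt : (l.take (k-1)).length = k - 1 := by rw [List.length_take]; omega
  have hdec := list_decomp l k h1 h2
  have hR : x ∈ l.take i ↔ x ∈ l.take (k-1) ∨ x = l.getD (k-1) 0 ∨ x = l.getD k 0
      ∨ x ∈ (l.drop (k+1)).take (i - ((k-1) + 2)) := by
    conv_lhs => rw [hdec]
    exact mem_take_mid _ _ _ _ _ _ _ hlt (by omega)
  have hL : x ∈ (swapAdj l k).take i ↔ x ∈ l.take (k-1) ∨ x = l.getD k 0 ∨ x = l.getD (k-1) 0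
      ∨ x ∈ (l.drop (k+1)).take (i - ((k-1) + 2)) :=
    mem_take_mid _ _ _ _ _ _ _ hlt (by omega)
  rw [hL, hR]
  tauto

lemma V_swapAdj (b l : List ℕ) (k i : ℕ) (h1 : 1 ≤ k) (h2 : k < l.length) (hik : i ≠ k) :
    V b (swapAdj l k) i = V b l i := by
  funext j
  unfold V
  congr 1
  rcases Nat.lt_or_ge i (k+1) with hi | hi
  · rw [take_swapAdj_le l k i h1 h2 (by omega)]
  · rw [if_congr (mem_take_swapAdj_gt l k i j h1 h2 (by omega)) rfl rfl]

lemma swapAdj_getD_k (l : List ℕ) (k : ℕ) (h1 : 1 ≤ k) (h2 : k < l.length) :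
    (swapAdj l k).getD k 0 = l.getD (k-1) 0 := by
  have hlt : (l.take (k-1)).length = k - 1 := by rw [List.length_take]; omega
  have hd : swapAdj l k = l.take (k-1) ++ [l.getD k 0, l.getD (k-1) 0] ++ l.drop (k+1) := rfl
  rw [hd, List.getD_eq_getElem?_getD, List.append_assoc, List.getElem?_append_right (by omega),
    hlt]
  have h9 : k - (k-1) = 1 := by omega
  rw [h9]
  simp [List.getD]

lemma swapAdj_swapAdj (l : List ℕ) (k : ℕ) (h1 : 1 ≤ k) (h2 : k < l.length) :
    swapAdj (swapAdj l k) k = l := by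
  have hlt : (l.take (k-1)).length = k - 1 := by rw [List.length_take]; omega
  have hd : swapAdj l k = l.take (k-1) ++ [l.getD k 0, l.getD (k-1) 0] ++ l.drop (k+1) := rfl
  have hlen := swapAdj_length l k h1 h2
  have ht : (swapAdj l k).take (k-1) = l.take (k-1) := take_swapAdj_le l k (k-1) h1 h2 le_rfl
  have hg1 : (swapAdj l k).getD (k-1) 0 = l.getD k 0 := by
    rw [hd, List.getD_eq_getElem?_getD, List.append_assoc, List.getElem?_append_right (by omega),
      hlt, Nat.sub_self]
    simp [List.getD]
  have hg2 : (swapAdj l k).getD k 0 = l.getD (k-1) 0 := by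
    rw [hd, List.getD_eq_getElem?_getD, List.append_assoc, List.getElem?_append_right (by omega),
      hlt]
    have : k - (k-1) = 1 := by omega
    rw [this]
    simp [List.getD]
  have hdr : (swapAdj l k).drop (k+1) = l.drop (k+1) := by
    rw [hd, List.append_assoc, List.drop_append, hlt,
      List.drop_of_length_le (l := l.take (k-1)) (by omega)]
    have : k + 1 - (k - 1) = 2 := by omega
    rw [this]
    simp
  calc swapAdj (swapAdj l k) k
      = (swapAdj l k).take (k-1) ++ [(swapAdj l k).getD k 0, (swapAdj l k).getD (k-1) 0]
        ++ (swapAdj l k).drop (k+1) := rfl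
    _ = l.take (k-1) ++ [l.getD (k-1) 0, l.getD k 0] ++ l.drop (k+1) := by rw [ht, hg1, hg2, hdr]
    _ = l := (list_decomp l k h1 h2).symm

lemma rotate_one_cons (a : ℕ) (t : List ℕ) : (a :: t).rotate 1 = t ++ [a] := by
  rw [List.rotate_cons_succ, List.rotate_zero]

lemma headD_cons_tail (l : List ℕ) (h : l ≠ []) : l.headD 0 :: l.tail = l := by
  cases l with
  | nil => simp at h
  | cons a t => rfl

lemma dropLast_concat_getLastD (l : List ℕ) (h : l ≠ []) :
    l.dropLast ++ [l.getLastD 0] = l := by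
  rcases List.eq_nil_or_concat l with rfl | ⟨L, a, rfl⟩
  · simp at h
  · simp [List.getLastD_concat, List.dropLast_concat]

lemma V_rot (b l : List ℕ) (i : ℕ) (hl : l ≠ []) (hnd : l.Nodup)
    (hb : l.headD 0 < b.length) (hi : i + 1 ≤ l.length) :
    V (incr b (l.headD 0)) (l.rotate 1) i = V b l (i+1) := by
  cases l with
  | nil => simp at hl
  | cons a t =>
    simp only [List.headD_cons] at hb ⊢
    simp only [List.length_cons] at hi
    rw [rotate_one_cons]
    funext j
    unfold V incr
    have htake : (t ++ [a]).take i = t.take i := by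
      rw [List.take_append,
        show i - t.length = 0 by omega, List.take_zero, List.append_nil]
    rw [htake, List.take_succ_cons]
    have hat : a ∉ t := (List.nodup_cons.1 hnd).1
    rcases eq_or_ne j a with hja | hne
    · subst hja
      rw [look_set _ _ _ _ hb, if_pos rfl,
        if_neg (fun hc => hat (List.mem_of_mem_take hc)),
        if_pos (List.mem_cons_self)]
    · rw [look_set _ _ _ _ hb, if_neg hne]
      have h5 : (j ∈ t.take i) ↔ (j ∈ a :: t.take i) := by
        simp [List.mem_cons, hne]
      rw [if_congr h5 rfl rfl]

def InCube (d N : ℕ) (x : ℕ → ℕ) : Prop := (∀ j, x j ≤ N) ∧ ∀ j, d ≤ j → x j = 0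

lemma look_lt {b : List ℕ} {N j : ℕ} (hb : ∀ a ∈ b, a < N) (hN : 1 ≤ N) :
    look b j + 1 ≤ N := by
  rcases Nat.lt_or_ge j b.length with h | h
  · have : b.getD j 0 = b[j] := List.getD_eq_getElem b 0 h
    unfold look
    rw [this]
    exact hb _ (List.getElem_mem h)
  · unfold look
    rw [List.getD_eq_getElem?_getD, List.getElem?_eq_none (by omega)]
    simpa using hN

lemma look_eq_zero {b : List ℕ} {j : ℕ} (h : b.length ≤ j) : look b j = 0 := by
  unfold look
  rw [List.getD_eq_getElem?_getD, List.getElem?_eq_none h]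
  rfl
lemma perm_facts {d : ℕ} {l : List ℕ} (hl : l ∈ perms d) :
    l.length = d ∧ l.Nodup ∧ (∀ x, x ∈ l ↔ x < d) := by
  rw [mem_perms] at hl
  refine ⟨hl.length_eq.trans (List.length_range), hl.nodup_iff.2 (List.nodup_range),
    fun x => (hl.mem_iff).trans List.mem_range⟩

lemma headD_mem {l : List ℕ} (h : l ≠ []) : l.headD 0 ∈ l := by
  cases l with
  | nil => simp at h
  | cons a t => exact List.mem_cons_self

lemma getLastD_mem {l : List ℕ} (h : l ≠ []) : l.getLastD 0 ∈ l := by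
  rcases List.eq_nil_or_concat l with rfl | ⟨L, a, rfl⟩
  · simp at h
  · simp [List.getLastD_concat]

lemma headD_mem_take {l : List ℕ} (i : ℕ) (h : l ≠ []) (hi : 1 ≤ i) :
    l.headD 0 ∈ l.take i := by
  cases l with
  | nil => simp at h
  | cons a t =>
    obtain ⟨i', rfl⟩ : ∃ i', i = i' + 1 := ⟨i - 1, by omega⟩
    rw [List.take_succ_cons]
    exact List.mem_cons_self

lemma getLastD_not_mem_take {l : List ℕ} (i : ℕ) (hnd : l.Nodup) (hi : i + 1 ≤ l.length) :
    l.getLastD 0 ∉ l.take i := by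
  rcases List.eq_nil_or_concat l with rfl | ⟨L, a, rfl⟩
  · simp
  · simp only [List.concat_eq_append] at hnd hi ⊢
    rw [List.getLastD_concat]
    have hlen : i ≤ L.length := by simp at hi; omega
    rw [List.take_append, show i - L.length = 0 by omega, List.take_zero,
      List.append_nil]
    have : a ∉ L := by
      rw [List.nodup_append] at hnd
      intro hc
      exact hnd.2.2 a hc a (List.mem_singleton_self a) rfl
    exact fun hc => this (List.mem_of_mem_take hc)

lemma V_inCube {d N : ℕ} {b l : List ℕ} (hN : 1 ≤ N) (hb : b ∈ lists d N) (hl : l ∈ perms d)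
    (k : ℕ) : InCube d N (V b l k) := by
  obtain ⟨hbl, hbe⟩ := mem_lists.1 hb
  obtain ⟨hll, hnd, hmem⟩ := perm_facts hl
  constructor
  · intro j
    unfold V
    split
    · exact look_lt hbe hN
    · have := look_lt (j := j) hbe hN
      omega
  · intro j hj
    unfold V
    rw [look_eq_zero (by omega), if_neg]
    intro hc
    have := (hmem j).1 (List.mem_of_mem_take hc)
    omega

/-- the doors -/
noncomputable def Dr (n N : ℕ) (lab : (ℕ → ℕ) → ℕ) : Finset ((List ℕ × List ℕ) × ℕ) :=
  (((lists (n+1) N) ×ˢ (perms (n+1))) ×ˢ (range (n+2))).filter fun t =>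
    ((range (n+2)).erase t.2).image (fun i => lab (V t.1.1 t.1.2 i)) = range (n+1)

lemma cpl_card_eq_dr {n N : ℕ} (hN : 1 ≤ N) (lab : (ℕ → ℕ) → ℕ)
    (hval : ∀ x, InCube (n+1) N x → lab x ≤ n+1) :
    ((Cpl (n+1) N lab).card : ZMod 2) = ((Dr n N lab).card : ZMod 2) := by
  classical
  have h1 : (Dr n N lab).card = ∑ p ∈ (lists (n+1) N) ×ˢ (perms (n+1)),
      ((range (n+2)).filter fun k => ((range (n+2)).erase k).image
        (fun i => lab (V p.1 p.2 i)) = range (n+1)).card := by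
    rw [Dr, Finset.card_filter, Finset.sum_product]
    refine Finset.sum_congr rfl fun p _ => ?_
    rw [Finset.card_filter]
  have h2 : (Cpl (n+1) N lab).card = ∑ p ∈ (lists (n+1) N) ×ˢ (perms (n+1)),
      if (range (n+2)).image (fun k => lab (V p.1 p.2 k)) = range (n+2) then 1 else 0 := by
    rw [Cpl, Finset.card_filter]
  rw [h1, h2]
  push_cast
  refine Finset.sum_congr rfl fun p hp => ?_
  rw [Finset.mem_product] at hp
  have hdp := doors_parity (n+2) (by omega) (fun k => lab (V p.1 p.2 k))
    (fun k hk => by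
      show lab (V p.1 p.2 k) < n + 2
      have := hval _ (V_inCube hN hp.1 hp.2 k)
      omega)
  have hsub : n + 2 - 1 = n + 1 := by omega
  rw [hsub] at hdp
  rw [hdp]

/-- the involution on doors -/
def iota (N : ℕ) (t : (List ℕ × List ℕ) × ℕ) : (List ℕ × List ℕ) × ℕ :=
  if t.2 = 0 then
    if look t.1.1 (t.1.2.headD 0) + 1 = N then t
    else ((incr t.1.1 (t.1.2.headD 0), t.1.2.rotate 1), t.1.2.length)
  else if t.2 = t.1.2.length then
    ((decr t.1.1 (t.1.2.getLastD 0), t.1.2.getLastD 0 :: t.1.2.dropLast), 0)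
  else ((t.1.1, swapAdj t.1.2 t.2), t.2)

lemma erase_zero_range (m : ℕ) :
    (range (m+1)).erase 0 = (range m).image (· + 1) := by
  apply Finset.ext
  intro x
  simp only [Finset.mem_erase, Finset.mem_range, Finset.mem_image]
  constructor
  · rintro ⟨h0, hm⟩
    exact ⟨x - 1, by omega, by omega⟩
  · rintro ⟨y, hy, rfl⟩
    omega

lemma erase_top_range (m : ℕ) : (range (m+1)).erase m = range m := by
  apply Finset.ext
  intro x
  simp only [Finset.mem_erase, Finset.mem_range]
  omega

/-- transfer of the door-image under base rotation -/
lemma door_image_rot {n N : ℕ} {b l : List ℕ} (hb : b ∈ lists (n+1) N) (hl : l ∈ perms (n+1))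
    (lab : (ℕ → ℕ) → ℕ) :
    ((range (n+2)).erase (n+1)).image
        (fun i => lab (V (incr b (l.headD 0)) (l.rotate 1) i))
      = ((range (n+2)).erase 0).image (fun i => lab (V b l i)) := by
  obtain ⟨hbl, hbe⟩ := mem_lists.1 hb
  obtain ⟨hll, hnd, hmem⟩ := perm_facts hl
  have hlne : l ≠ [] := by
    intro h; rw [h] at hll; simp at hll
  have hhead : l.headD 0 < b.length := by
    rw [hbl]
    exact (hmem _).1 (headD_mem hlne)
  rw [erase_top_range, erase_zero_range, Finset.image_image]
  refine Finset.image_congr fun i hi => ?_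
  rw [Finset.mem_coe, Finset.mem_range] at hi
  have := V_rot b l i hlne hnd hhead (by omega)
  simp only [Function.comp_apply]
  rw [this]

lemma iota_eval (N : ℕ) (b l : List ℕ) (k : ℕ) :
    iota N ((b, l), k) = if k = 0 then
      (if look b (l.headD 0) + 1 = N then ((b, l), k)
       else ((incr b (l.headD 0), l.rotate 1), l.length))
    else if k = l.length then
      ((decr b (l.getLastD 0), l.getLastD 0 :: l.dropLast), 0)
    else ((b, swapAdj l k), k) := rfl

lemma mem_Dr {n N : ℕ} {lab : (ℕ → ℕ) → ℕ} {b l : List ℕ} {k : ℕ} :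
    ((b, l), k) ∈ Dr n N lab ↔ b ∈ lists (n+1) N ∧ l ∈ perms (n+1) ∧ k < n + 2 ∧
      ((range (n+2)).erase k).image (fun i => lab (V b l i)) = range (n+1) := by
  rw [Dr, Finset.mem_filter, Finset.mem_product, Finset.mem_product, Finset.mem_range]
  tauto

lemma iota_spec {n N : ℕ} {lab : (ℕ → ℕ) → ℕ} (hN : 1 ≤ N)
    (h0 : ∀ x, InCube (n+1) N x → ∀ j, j < n+1 → x j = 0 → lab x ≠ j)
    {t : (List ℕ × List ℕ) × ℕ} (ht : t ∈ Dr n N lab) :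
    iota N t ∈ Dr n N lab ∧ iota N (iota N t) = t := by
  obtain ⟨⟨b, l⟩, k⟩ := t
  rw [mem_Dr] at ht
  obtain ⟨hb, hl, hkr, hdoor⟩ := ht
  obtain ⟨hbl, hbe⟩ := mem_lists.1 hb
  obtain ⟨hll, hnd, hmem⟩ := perm_facts hl
  have hlne : l ≠ [] := by intro h; rw [h] at hll; simp at hll
  by_cases hk0 : k = 0
  · subst hk0
    by_cases hbd : look b (l.headD 0) + 1 = N
    · have hfix : iota N ((b, l), 0) = ((b, l), 0) := by
        rw [iota_eval, if_pos rfl, if_pos hbd]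
      rw [hfix]
      rw [hfix]
      exact ⟨mem_Dr.2 ⟨hb, hl, by omega, hdoor⟩, rfl⟩
    · -- rotation case
      have hhb : l.headD 0 < b.length := by
        rw [hbl]; exact (hmem _).1 (headD_mem hlne)
      have hlook : look b (l.headD 0) + 1 < N :=
        lt_of_le_of_ne (look_lt hbe hN) hbd
      have hi1 : iota N ((b, l), 0) = ((incr b (l.headD 0), l.rotate 1), l.length) := by
        rw [iota_eval, if_pos rfl, if_neg hbd]
      have hbin : incr b (l.headD 0) ∈ lists (n+1) N := by
        rw [mem_lists]
        refine ⟨by rw [incr, List.length_set, hbl], fun a ha => ?_⟩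
        rcases List.mem_or_eq_of_mem_set ha with h | rfl
        · exact hbe a h
        · omega
      have hlin : l.rotate 1 ∈ perms (n+1) :=
        mem_perms.2 ((List.rotate_perm l 1).trans (mem_perms.1 hl))
      have hdoor' : ((range (n+2)).erase (n+1)).image
          (fun i => lab (V (incr b (l.headD 0)) (l.rotate 1) i)) = range (n+1) := by
        rw [door_image_rot hb hl lab]
        exact hdoor
      constructor
      · rw [hi1, hll]
        exact mem_Dr.2 ⟨hbin, hlin, by omega, hdoor'⟩
      · rw [hi1]
        -- now compute iota of the rotated simplex
        obtain ⟨a, s, rfl⟩ : ∃ a s, l = a :: s := by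
          cases l with
          | nil => simp at hlne
          | cons a s => exact ⟨a, s, rfl⟩
        simp only [List.headD_cons] at hhb hlook ⊢
        rw [rotate_one_cons, iota_eval,
          if_neg (show (a :: s).length ≠ 0 by simp),
          if_pos (show (a :: s).length = (s ++ [a]).length by simp),
          List.getLastD_concat, List.dropLast_concat, decr_incr b a hhb]
  · by_cases hkl : k = l.length
    · -- shift case
      subst hkl
      rw [hll] at hdoor
      set g := l.getLastD 0 with hg
      have hgmem : g ∈ l := getLastD_mem hlne
      have hglt : g < n + 1 := (hmem g).1 hgmem
      have hgb : g < b.length := by omega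
      have hglook : 1 ≤ look b g := by
        by_contra hc
        push_neg at hc
        have hzero : look b g = 0 := by omega
        have himg : g ∈ ((range (n+2)).erase (n+1)).image (fun i => lab (V b l i)) := by
          rw [hdoor, Finset.mem_range]; omega
        obtain ⟨i, hi, hlabi⟩ := Finset.mem_image.1 himg
        rw [Finset.mem_erase, Finset.mem_range] at hi
        have hcoord : V b l i g = 0 := by
          unfold V
          rw [hzero, if_neg (getLastD_not_mem_take i hnd (by omega))]
        exact h0 (V b l i) (V_inCube hN hb hl i) g hglt hcoord hlabi
      have hi1 : iota N ((b, l), l.length) = ((decr b g, g :: l.dropLast), 0) := by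
        rw [iota_eval, if_neg (by omega), if_pos rfl]
      have hldec : l.dropLast ++ [g] = l := dropLast_concat_getLastD l hlne
      have hbin : decr b g ∈ lists (n+1) N := by
        rw [mem_lists]
        refine ⟨by rw [decr, List.length_set, hbl], fun a ha => ?_⟩
        rcases List.mem_or_eq_of_mem_set ha with h | rfl
        · exact hbe a h
        · have := look_lt (j := g) hbe hN
          omega
      have hlin : (g :: l.dropLast) ∈ perms (n+1) := by
        rw [mem_perms]
        refine List.Perm.trans ?_ (mem_perms.1 hl)
        conv_rhs => rw [← hldec]
        exact (List.perm_append_singleton g l.dropLast).symm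
      have hrotid : (g :: l.dropLast).rotate 1 = l := by
        rw [rotate_one_cons, hldec]
      have hheadid : (g :: l.dropLast).headD 0 = g := rfl
      have hincr : incr (decr b g) g = b := incr_decr b g hglook
      have hdoor' : ((range (n+2)).erase 0).image
          (fun i => lab (V (decr b g) (g :: l.dropLast) i)) = range (n+1) := by
        rw [← door_image_rot hbin hlin lab, hheadid, hincr, hrotid]
        exact hdoor
      constructor
      · rw [hi1]
        exact mem_Dr.2 ⟨hbin, hlin, by omega, hdoor'⟩
      · rw [hi1, iota_eval, if_pos rfl]
        have hlookd : look (decr b g) (( g :: l.dropLast).headD 0) + 1 ≠ N := by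
          rw [hheadid, decr, look_set _ _ _ _ hgb, if_pos rfl]
          have := look_lt (j := g) hbe hN
          omega
        rw [if_neg hlookd, hheadid, hincr, hrotid]
        rw [show (g :: l.dropLast).length = l.length by
          rw [List.length_cons, List.length_dropLast]; omega]
    · -- swap case
      have hk1 : 1 ≤ k := by omega
      have hkn : k < l.length := by
        rw [hll]; omega
      have hi1 : iota N ((b, l), k) = ((b, swapAdj l k), k) := by
        rw [iota_eval, if_neg hk0, if_neg hkl]
      have hlin : swapAdj l k ∈ perms (n+1) :=
        mem_perms.2 ((swapAdj_perm l k hk1 hkn).trans (mem_perms.1 hl))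
      have hdoor' : ((range (n+2)).erase k).image
          (fun i => lab (V b (swapAdj l k) i)) = range (n+1) := by
        rw [← hdoor]
        refine Finset.image_congr fun i hi => ?_
        rw [Finset.mem_coe, Finset.mem_erase] at hi
        rw [V_swapAdj b l k i hk1 hkn hi.1]
      constructor
      · rw [hi1]
        exact mem_Dr.2 ⟨hb, hlin, by omega, hdoor'⟩
      · rw [hi1, iota_eval, if_neg hk0,
          if_neg (by rw [swapAdj_length l k hk1 hkn]; exact hkl),
          swapAdj_swapAdj l k hk1 hkn]

lemma fixed_iff {n N : ℕ} {lab : (ℕ → ℕ) → ℕ} (hN : 1 ≤ N)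
    (hNc : ∀ x, InCube (n+1) N x → ∀ j, j < n+1 → x j = N → lab x ≤ j)
    {t : (List ℕ × List ℕ) × ℕ} (ht : t ∈ Dr n N lab) :
    iota N t = t ↔ t.2 = 0 ∧ t.1.2.headD 0 = n ∧ look t.1.1 n + 1 = N := by
  obtain ⟨⟨b, l⟩, k⟩ := t
  rw [mem_Dr] at ht
  obtain ⟨hb, hl, hkr, hdoor⟩ := ht
  obtain ⟨hbl, hbe⟩ := mem_lists.1 hb
  obtain ⟨hll, hnd, hmem⟩ := perm_facts hl
  have hlne : l ≠ [] := by intro h; rw [h] at hll; simp at hll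
  constructor
  · intro hfix
    by_cases hk0 : k = 0
    · subst hk0
      by_cases hbd : look b (l.headD 0) + 1 = N
      · have hclaim : l.headD 0 = n := by
          by_contra hne
          have hhlt : l.headD 0 < n + 1 := (hmem _).1 (headD_mem hlne)
          have hhn : l.headD 0 < n := by omega
          have hmemn : (n : ℕ) ∈ ((range (n+2)).erase 0).image (fun i => lab (V b l i)) := by
            rw [hdoor, Finset.mem_range]; omega
          obtain ⟨i, hi, hlabi⟩ := Finset.mem_image.1 hmemn
          rw [Finset.mem_erase, Finset.mem_range] at hi
          have hcoord : V b l i (l.headD 0) = N := by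
            unfold V
            rw [if_pos (headD_mem_take i hlne (by omega))]
            exact hbd
          have := hNc (V b l i) (V_inCube hN hb hl i) (l.headD 0) (by omega) hcoord
          omega
        exact ⟨rfl, hclaim, by rw [← hclaim]; exact hbd⟩
      · exfalso
        rw [iota_eval, if_pos rfl, if_neg hbd] at hfix
        have := congrArg Prod.snd hfix
        simp only at this
        omega
    · by_cases hkl : k = l.length
      · exfalso
        rw [iota_eval, if_neg hk0, if_pos hkl] at hfix
        have := congrArg Prod.snd hfix
        simp only at this
        exact hk0 this.symm
      · exfalso
        have hk1 : 1 ≤ k := by omega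
        have hkn : k < l.length := by omega
        rw [iota_eval, if_neg hk0, if_neg hkl] at hfix
        have hswap : swapAdj l k = l := by
          have := congrArg (fun p => p.1.2) hfix
          simpa using this
        have hgd := swapAdj_getD_k l k hk1 hkn
        rw [hswap] at hgd
        rw [List.getD_eq_getElem _ _ (show k < l.length by omega),
          List.getD_eq_getElem _ _ (show k - 1 < l.length by omega)] at hgd
        have := (hnd.getElem_inj_iff).1 hgd
        omega
  · rintro ⟨hk0, hhead, hlook⟩
    simp only at hk0 hhead hlook
    subst hk0
    rw [iota_eval, if_pos rfl, if_pos (by rw [hhead]; exact hlook)]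

lemma image_shift (m : ℕ) (f : ℕ → ℕ) :
    (range m).image (fun i => f (i+1)) = ((range (m+1)).erase 0).image f := by
  rw [erase_zero_range, Finset.image_image]
  rfl

lemma V_face {n N : ℕ} {b l : List ℕ} (hbl : b.length = n+1) (hll : l.length = n+1)
    (hmem : ∀ x, x ∈ l ↔ x < n+1) (hhead : l.headD 0 = n) (hbn : look b n + 1 = N)
    (i : ℕ) :
    V b l (i+1) = Function.update (V (b.take n) l.tail i) n N := by
  have hlne : l ≠ [] := by intro h; rw [h] at hll; simp at hll
  have hcons : n :: l.tail = l := by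
    rw [← hhead]; exact headD_cons_tail l hlne
  have htake : l.take (i+1) = n :: l.tail.take i := by
    conv_lhs => rw [← hcons]
    rw [List.take_succ_cons]
  funext j
  rcases lt_trichotomy j n with hj | rfl | hj
  · rw [Function.update_of_ne (by omega)]
    unfold V
    have hlookeq : look (b.take n) j = look b j := by
      unfold look
      rw [List.getD_eq_getElem?_getD, List.getD_eq_getElem?_getD, List.getElem?_take,
        if_pos hj]
    rw [hlookeq, htake]
    congr 1
    have : (j ∈ n :: l.tail.take i) ↔ (j ∈ l.tail.take i) := by
      simp only [List.mem_cons]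
      constructor
      · rintro (rfl | h)
        · omega
        · exact h
      · exact Or.inr
    rw [if_congr this rfl rfl]
  · rw [Function.update_self]
    unfold V
    rw [htake, if_pos (List.mem_cons_self)]
    exact hbn
  · rw [Function.update_of_ne (by omega)]
    unfold V
    have h1 : look b j = 0 := look_eq_zero (by omega)
    have h2 : look (b.take n) j = 0 := look_eq_zero (by rw [List.length_take]; omega)
    have h3 : j ∉ l.take (i+1) := fun hc => by
      have := (hmem j).1 (List.mem_of_mem_take hc)
      omega
    have h4 : j ∉ l.tail.take i := fun hc => by
      have h5 : j ∈ l.tail := List.mem_of_mem_take hc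
      have h6 : j ∈ l := by rw [← hcons]; exact List.mem_cons_of_mem _ h5
      have := (hmem j).1 h6
      omega
    rw [h1, h2, if_neg h3, if_neg h4]

lemma recon_b {n N : ℕ} {b : List ℕ} (hbl : b.length = n+1) (hbn : look b n + 1 = N) :
    b = b.take n ++ [N-1] := by
  conv_lhs => rw [← List.take_append_drop n b]
  congr 1
  rw [List.drop_eq_getElem_cons (by omega)]
  have h2 : b.drop (n+1) = [] := by
    rw [List.drop_eq_nil_iff]
    omega
  rw [h2]
  have h3 : b[n] = N - 1 := by
    have := List.getD_eq_getElem b 0 (show n < b.length by omega)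
    unfold look at hbn
    omega
  rw [h3]

lemma fix_card {n N : ℕ} {lab : (ℕ → ℕ) → ℕ} (hN : 1 ≤ N)
    (hNc : ∀ x, InCube (n+1) N x → ∀ j, j < n+1 → x j = N → lab x ≤ j) :
    ((Dr n N lab).filter fun t => iota N t = t).card
      = (Cpl n N (fun x => lab (Function.update x n N))).card := by
  classical
  apply Finset.card_bij (fun t _ => (t.1.1.take n, t.1.2.tail))
  · -- membership
    rintro ⟨⟨b, l⟩, k⟩ ha
    rw [Finset.mem_filter] at ha
    obtain ⟨hdr, hfix⟩ := ha
    obtain ⟨hk0, hhead, hlook⟩ := (fixed_iff hN hNc hdr).1 hfix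
    simp only at hk0 hhead hlook
    subst hk0
    show (b.take n, l.tail) ∈ Cpl n N (fun x => lab (Function.update x n N))
    rw [mem_Dr] at hdr
    obtain ⟨hb, hl, hkr, hdoor⟩ := hdr
    obtain ⟨hbl, hbe⟩ := mem_lists.1 hb
    obtain ⟨hll, hnd, hmem⟩ := perm_facts hl
    have hlne : l ≠ [] := by intro h; rw [h] at hll; simp at hll
    have hcons : n :: l.tail = l := by rw [← hhead]; exact headD_cons_tail l hlne
    rw [Cpl, Finset.mem_filter, Finset.mem_product]
    refine ⟨⟨?_, ?_⟩, ?_⟩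
    · rw [mem_lists]
      refine ⟨by rw [List.length_take]; omega, fun a ha => hbe a (List.mem_of_mem_take ha)⟩
    · rw [mem_perms]
      have h1 : (n :: l.tail).Perm (n :: List.range n) := by
        rw [hcons]
        refine (mem_perms.1 hl).trans ?_
        rw [List.range_succ]
        exact List.perm_append_singleton n (List.range n)
      exact h1.cons_inv
    · have himg : ∀ i : ℕ, lab (Function.update (V (b.take n) l.tail i) n N)
          = lab (V b l (i+1)) := fun i => by
        rw [← V_face hbl hll hmem hhead hlook i]
      calc (range (n+1)).image (fun i => lab (Function.update (V (b.take n) l.tail i) n N))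
          = (range (n+1)).image (fun i => lab (V b l (i+1))) := by
            refine Finset.image_congr fun i _ => himg i
        _ = ((range (n+2)).erase 0).image (fun i => lab (V b l i)) := by
            exact image_shift (n+1) (fun i => lab (V b l i))
        _ = range (n+1) := hdoor
  · -- injectivity
    rintro ⟨⟨b₁, l₁⟩, k₁⟩ h₁ ⟨⟨b₂, l₂⟩, k₂⟩ h₂ heq
    rw [Finset.mem_filter] at h₁ h₂
    obtain ⟨hdr₁, hfix₁⟩ := h₁
    obtain ⟨hdr₂, hfix₂⟩ := h₂
    obtain ⟨hk₁, hhead₁, hlook₁⟩ := (fixed_iff hN hNc hdr₁).1 hfix₁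
    obtain ⟨hk₂, hhead₂, hlook₂⟩ := (fixed_iff hN hNc hdr₂).1 hfix₂
    simp only at hk₁ hhead₁ hlook₁ hk₂ hhead₂ hlook₂
    obtain ⟨hbl₁, -⟩ := mem_lists.1 (mem_Dr.1 hdr₁).1
    obtain ⟨hbl₂, -⟩ := mem_lists.1 (mem_Dr.1 hdr₂).1
    obtain ⟨hll₁, -, -⟩ := perm_facts (mem_Dr.1 hdr₁).2.1
    obtain ⟨hll₂, -, -⟩ := perm_facts (mem_Dr.1 hdr₂).2.1
    have hlne₁ : l₁ ≠ [] := by intro h; rw [h] at hll₁; simp at hll₁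
    have hlne₂ : l₂ ≠ [] := by intro h; rw [h] at hll₂; simp at hll₂
    have heq1 : b₁.take n = b₂.take n := congrArg Prod.fst heq
    have heq2 : l₁.tail = l₂.tail := congrArg Prod.snd heq
    have hb : b₁ = b₂ := by
      rw [recon_b hbl₁ hlook₁, recon_b hbl₂ hlook₂, heq1]
    have hlc : l₁ = l₂ := by
      rw [← headD_cons_tail l₁ hlne₁, ← headD_cons_tail l₂ hlne₂, hhead₁, hhead₂, heq2]
    rw [Prod.ext_iff, Prod.ext_iff]
    exact ⟨⟨hb, hlc⟩, by rw [hk₁, hk₂]⟩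
  · -- surjectivity
    rintro ⟨b', l'⟩ hp
    rw [Cpl, Finset.mem_filter, Finset.mem_product] at hp
    obtain ⟨⟨hb', hl'⟩, hcpl⟩ := hp
    obtain ⟨hbl', hbe'⟩ := mem_lists.1 hb'
    obtain ⟨hll', hnd', hmem'⟩ := perm_facts hl'
    refine ⟨((b' ++ [N-1], n :: l'), 0), ?_, ?_⟩
    swap
    · show ((b' ++ [N-1]).take n, (n :: l').tail) = (b', l')
      rw [List.tail_cons]
      congr 1
      rw [← hbl', List.take_left]
    · have hbmem : b' ++ [N-1] ∈ lists (n+1) N := by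
        rw [mem_lists]
        constructor
        · rw [List.length_append, hbl']; rfl
        · intro a ha
          rcases List.mem_append.1 ha with h | h
          · exact hbe' a h
          · rw [List.mem_singleton] at h
            omega
      have hlmem : n :: l' ∈ perms (n+1) := by
        rw [mem_perms]
        have h1 : (n :: l').Perm (n :: List.range n) := (mem_perms.1 hl').cons _
        refine h1.trans ?_
        rw [List.range_succ]
        exact (List.perm_append_singleton n (List.range n)).symm
      have hbtake : (b' ++ [N-1]).take n = b' := by
        rw [← hbl', List.take_left]
      have hlook : look (b' ++ [N-1]) n + 1 = N := by
        unfold look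
        rw [List.getD_eq_getElem?_getD, List.getElem?_append_right hbl'.le, hbl', Nat.sub_self]
        simp only [List.getElem?_cons_zero, Option.getD_some]
        omega
      have hmem2 : ∀ x, x ∈ n :: l' ↔ x < n + 1 := by
        intro x
        rw [List.mem_cons]
        constructor
        · rintro (rfl | h)
          · omega
          · have := (hmem' x).1 h; omega
        · intro hx
          rcases eq_or_ne x n with rfl | hne
          · exact Or.inl rfl
          · exact Or.inr ((hmem' x).2 (by omega))
      have hbl2 : (b' ++ [N-1]).length = n + 1 := by rw [List.length_append, hbl']; rfl
      have hll2 : (n :: l').length = n + 1 := by rw [List.length_cons, hll']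
      have hdoor : ((range (n+2)).erase 0).image
          (fun i => lab (V (b' ++ [N-1]) (n :: l') i)) = range (n+1) := by
        rw [← image_shift (n+1)]
        calc (range (n+1)).image (fun i => lab (V (b' ++ [N-1]) (n :: l') (i+1)))
            = (range (n+1)).image
              (fun i => lab (Function.update (V b' l' i) n N)) := by
              refine Finset.image_congr fun i _ => ?_
              show lab (V (b' ++ [N-1]) (n :: l') (i+1))
                = lab (Function.update (V b' l' i) n N)
              rw [V_face hbl2 hll2 hmem2 rfl hlook i, hbtake, List.tail_cons]
          _ = range (n+1) := hcpl
      have hdr : ((b' ++ [N-1], n :: l'), 0) ∈ Dr n N lab :=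
        mem_Dr.2 ⟨hbmem, hlmem, by omega, hdoor⟩
      rw [Finset.mem_filter]
      refine ⟨hdr, ?_⟩
      rw [fixed_iff hN hNc hdr]
      exact ⟨rfl, rfl, hlook⟩

lemma inCube_update {n N : ℕ} {x : ℕ → ℕ} (h : InCube n N x) :
    InCube (n+1) N (Function.update x n N) := by
  constructor
  · intro j
    rcases eq_or_ne j n with rfl | hne
    · rw [Function.update_self]
    · rw [Function.update_of_ne hne]
      exact h.1 j
  · intro j hj
    rw [Function.update_of_ne (by omega)]
    exact h.2 j (by omega)

theorem sperner_odd : ∀ (n : ℕ) (N : ℕ) (lab : (ℕ → ℕ) → ℕ), 1 ≤ N →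
    (∀ x, InCube n N x → lab x ≤ n) →
    (∀ x, InCube n N x → ∀ j, j < n → x j = 0 → lab x ≠ j) →
    (∀ x, InCube n N x → ∀ j, j < n → x j = N → lab x ≤ j) →
    ((Cpl n N lab).card : ZMod 2) = 1 := by
  intro n
  induction n with
  | zero =>
    intro N lab hN hval h0 hNc
    have hV : V [] [] 0 = fun _ => 0 := by
      funext j
      unfold V look
      simp
    have hcube : InCube 0 N (fun _ => 0) := ⟨fun j => Nat.zero_le N, fun j hj => rfl⟩
    have hlab : lab (fun _ => 0) = 0 := Nat.le_zero.1 (hval _ hcube)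
    have hperm : perms 0 = {[]} := by
      apply Finset.ext
      intro l
      rw [mem_perms]
      simp [List.range_zero, List.perm_nil]
    have hlists : lists 0 N = {[]} := rfl
    rw [Cpl, hperm, hlists, Finset.singleton_product_singleton, Finset.filter_singleton]
    rw [if_pos]
    · simp
    · show (range 1).image (fun k => lab (V [] [] k)) = range 1
      rw [Finset.range_one, Finset.image_singleton, hV, hlab]
  | succ n ih =>
    intro N lab hN hval h0 hNc
    have step1 := cpl_card_eq_dr hN lab hval
    have step2 := card_modEq_fixed (Dr n N lab) (iota N)
      (fun a ha => (iota_spec hN h0 ha).1) (fun a ha => (iota_spec hN h0 ha).2)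
    have step3 := fix_card hN hNc
    have hval' : ∀ x, InCube n N x → (fun x => lab (Function.update x n N)) x ≤ n := by
      intro x hx
      exact hNc _ (inCube_update hx) n (by omega) (Function.update_self n N x)
    have h0' : ∀ x, InCube n N x → ∀ j, j < n → x j = 0 →
        (fun x => lab (Function.update x n N)) x ≠ j := by
      intro x hx j hj hxj
      refine h0 _ (inCube_update hx) j (by omega) ?_
      rw [Function.update_of_ne (by omega)]
      exact hxj
    have hNc' : ∀ x, InCube n N x → ∀ j, j < n → x j = N →
        (fun x => lab (Function.update x n N)) x ≤ j := by
      intro x hx j hj hxj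
      refine hNc _ (inCube_update hx) j (by omega) ?_
      rw [Function.update_of_ne (by omega)]
      exact hxj
    have step4 := ih N (fun x => lab (Function.update x n N)) hN hval' h0' hNc'
    rw [step1, step2, step3, step4]

/-- Existence form of the combinatorial lemma -/
theorem sperner_exists (n N : ℕ) (lab : (ℕ → ℕ) → ℕ) (hN : 1 ≤ N)
    (hval : ∀ x, InCube n N x → lab x ≤ n)
    (h0 : ∀ x, InCube n N x → ∀ j, j < n → x j = 0 → lab x ≠ j)
    (hNc : ∀ x, InCube n N x → ∀ j, j < n → x j = N → lab x ≤ j) :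
    ∃ b l, b ∈ lists n N ∧ l ∈ perms n ∧
      (range (n+1)).image (fun k => lab (V b l k)) = range (n+1) := by
  have h := sperner_odd n N lab hN hval h0 hNc
  have hne : (Cpl n N lab).Nonempty := by
    rw [Finset.nonempty_iff_ne_empty]
    intro hc
    rw [hc] at h
    simp at h
  obtain ⟨⟨b, l⟩, hmem⟩ := hne
  rw [Cpl, Finset.mem_filter, Finset.mem_product] at hmem
  exact ⟨b, l, hmem.1.1, hmem.1.2, hmem.2⟩

/-! ### Analytic part -/

open Real in
lemma coord_le_dist {n : ℕ} (x y : EuclideanSpace ℝ (Fin n)) (i : Fin n) :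
    |x i - y i| ≤ dist x y := by
  rw [EuclideanSpace.dist_eq]
  have h1 : |x i - y i| = Real.sqrt (dist (x i) (y i) ^ 2) := by
    rw [Real.sqrt_sq dist_nonneg, Real.dist_eq]
  rw [h1]
  exact Real.sqrt_le_sqrt (Finset.single_le_sum (f := fun j => dist (x j) (y j) ^ 2)
    (fun j _ => sq_nonneg _) (Finset.mem_univ i))

lemma dist_le_of_coord_le {n : ℕ} {x y : EuclideanSpace ℝ (Fin n)} {c : ℝ} (hc : 0 ≤ c)
    (h : ∀ i, |x i - y i| ≤ c) : dist x y ≤ Real.sqrt n * c := by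
  rw [EuclideanSpace.dist_eq]
  have h2 : ∑ i, dist (x i) (y i) ^ 2 ≤ (n : ℝ) * c ^ 2 := by
    calc ∑ i, dist (x i) (y i) ^ 2 ≤ ∑ _i : Fin n, c ^ 2 := by
          apply Finset.sum_le_sum
          intro i _
          rw [Real.dist_eq]
          exact pow_le_pow_left₀ (abs_nonneg _) (h i) 2
      _ = (n : ℝ) * c ^ 2 := by
          rw [Finset.sum_const, Finset.card_univ, Fintype.card_fin, nsmul_eq_mul]
  calc Real.sqrt (∑ i, dist (x i) (y i) ^ 2) ≤ Real.sqrt ((n : ℝ) * c ^ 2) :=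
        Real.sqrt_le_sqrt h2
    _ = Real.sqrt n * c := by
        rw [Real.sqrt_mul (Nat.cast_nonneg n), Real.sqrt_sq hc]

def cube (n : ℕ) : Set (EuclideanSpace ℝ (Fin n)) := {x | ∀ i, x i ∈ Set.Icc (0:ℝ) 1}

lemma zero_mem_cube {n : ℕ} : (0 : EuclideanSpace ℝ (Fin n)) ∈ cube n := by
  intro i
  simp [Set.mem_Icc]

lemma cube_compact {n : ℕ} : IsCompact (cube n) := by
  apply Metric.isCompact_of_isClosed_isBounded
  · have hrw : cube n = ⋂ i, (EuclideanSpace.proj (𝕜 := ℝ) i) ⁻¹' (Set.Icc 0 1) := by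
      ext x
      simp only [cube, Set.mem_setOf_eq, Set.mem_iInter, Set.mem_preimage]
      exact Iff.rfl
    rw [hrw]
    exact isClosed_iInter fun i =>
      IsClosed.preimage (EuclideanSpace.proj i).continuous isClosed_Icc
  · rw [Metric.isBounded_iff]
    refine ⟨Real.sqrt n * 1, fun x hx y hy => ?_⟩
    apply dist_le_of_coord_le zero_le_one
    intro i
    obtain ⟨h1, h2⟩ := hx i
    obtain ⟨h3, h4⟩ := hy i
    rw [abs_le]
    constructor <;> linarith

/-- approximate fixed points on the cube -/
lemma cube_approx_fixed {n : ℕ} (f : EuclideanSpace ℝ (Fin n) → EuclideanSpace ℝ (Fin n))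
    (hf : Continuous f) (hmap : Set.MapsTo f (cube n) (cube n)) {ε : ℝ} (hε : 0 < ε) :
    ∃ x ∈ cube n, ∀ i, |f x i - x i| ≤ ε := by
  classical
  have huc := cube_compact.uniformContinuousOn_of_continuous hf.continuousOn (s := cube n)
  rw [Metric.uniformContinuousOn_iff] at huc
  obtain ⟨δ, hδpos, hδ⟩ := huc (ε/2) (by positivity)
  obtain ⟨N, hNgt⟩ := exists_nat_gt (max (Real.sqrt n / δ) (2 / ε))
  have hmax0 : (0:ℝ) ≤ max (Real.sqrt n / δ) (2 / ε) :=
    le_max_of_le_left (by positivity)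
  have hNR : (0:ℝ) < N := lt_of_le_of_lt hmax0 hNgt
  have hN0 : 0 < N := by exact_mod_cast hNR
  have hN1 : 1 ≤ N := hN0
  -- lattice point to euclidean point
  set pt : (ℕ → ℕ) → EuclideanSpace ℝ (Fin n) :=
    fun x => WithLp.toLp 2 (fun i : Fin n => (x i : ℝ) / N) with hpt
  have hptcube : ∀ x : ℕ → ℕ, InCube n N x → pt x ∈ cube n := by
    intro x hx i
    constructor
    · positivity
    · rw [div_le_one hNR]
      exact_mod_cast hx.1 i
  -- the labelling
  set S : (ℕ → ℕ) → Set ℕ :=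
    fun x => {j | ∃ hj : j < n, 0 < x j ∧ f (pt x) ⟨j, hj⟩ ≤ (x j : ℝ) / N} with hS
  set lab : (ℕ → ℕ) → ℕ := fun x => if h : (S x).Nonempty then sInf (S x) else n with hlab
  have hlab_lt : ∀ x, (S x).Nonempty → lab x ∈ S x ∧ lab x < n := by
    intro x hx
    rw [hlab]
    simp only [dif_pos hx]
    refine ⟨Nat.sInf_mem hx, ?_⟩
    obtain ⟨hj, -⟩ := Nat.sInf_mem hx
    exact hj
  have hval : ∀ x, InCube n N x → lab x ≤ n := by
    intro x hx
    rcases Set.eq_empty_or_nonempty (S x) with he | hne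
    · show (if h : (S x).Nonempty then sInf (S x) else n) ≤ n
      rw [dif_neg (by rw [he]; exact Set.not_nonempty_empty)]
    · exact le_of_lt (hlab_lt x hne).2
  have h0 : ∀ x, InCube n N x → ∀ j, j < n → x j = 0 → lab x ≠ j := by
    intro x hx j hj hxj hc
    rcases Set.eq_empty_or_nonempty (S x) with he | hne
    · rw [hlab] at hc
      simp only [he, Set.not_nonempty_empty, dif_neg, not_false_iff] at hc
      omega
    · obtain ⟨hmem, -⟩ := hlab_lt x hne
      rw [hc] at hmem
      obtain ⟨-, hpos, -⟩ := hmem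
      omega
  have hNc : ∀ x, InCube n N x → ∀ j, j < n → x j = N → lab x ≤ j := by
    intro x hx j hj hxj
    have hjS : j ∈ S x := by
      refine ⟨hj, by omega, ?_⟩
      have hcube := hptcube x hx
      have hfc := hmap hcube
      have := (hfc ⟨j, hj⟩).2
      rw [hxj]
      rw [div_self (ne_of_gt hNR)]
      exact this
    have hne : (S x).Nonempty := ⟨j, hjS⟩
    rw [hlab]
    simp only [dif_pos hne]
    exact Nat.sInf_le hjS
  obtain ⟨b, l, hb, hl, himg⟩ := sperner_exists n N lab hN1 hval h0 hNc
  have hver : ∀ k, InCube n N (V b l k) := fun k => V_inCube hN1 hb hl k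
  have hvcube : ∀ k, pt (V b l k) ∈ cube n := fun k => hptcube _ (hver k)
  have hfull : ∀ m, m < n + 1 → ∃ k, k < n + 1 ∧ lab (V b l k) = m := by
    intro m hm
    have : m ∈ (range (n+1)).image (fun k => lab (V b l k)) := by
      rw [himg, Finset.mem_range]
      exact hm
    obtain ⟨k, hk, hkeq⟩ := Finset.mem_image.1 this
    exact ⟨k, Finset.mem_range.1 hk, hkeq⟩
  -- vertex proximity
  have hprox : ∀ k k' (i : Fin n), |pt (V b l k) i - pt (V b l k') i| ≤ 1 / N := by
    intro k k' i
    show |((V b l k i : ℕ) : ℝ) / N - ((V b l k' i : ℕ) : ℝ) / N| ≤ 1 / N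
    rw [div_sub_div_same, abs_div, abs_of_pos hNR]
    have hnum : |((V b l k i : ℕ) : ℝ) - ((V b l k' i : ℕ) : ℝ)| ≤ 1 := by
      simp only [V]
      push_cast
      split_ifs <;> norm_num
    gcongr
  -- distances between vertices
  have hvdist : ∀ k k', dist (pt (V b l k)) (pt (V b l k')) < δ := by
    intro k k'
    have h1 : dist (pt (V b l k)) (pt (V b l k')) ≤ Real.sqrt n * (1/N) :=
      dist_le_of_coord_le (by positivity) (hprox k k')
    have h3 : Real.sqrt n / δ < N := lt_of_le_of_lt (le_max_left _ _) hNgt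
    rw [div_lt_iff₀ hδpos] at h3
    have h2 : Real.sqrt n * (1/(N:ℝ)) < δ := by
      rw [mul_one_div, div_lt_iff₀ hNR]
      linarith
    linarith
  have hNeps : 1 / (N:ℝ) < ε / 2 := by
    have h3 : 2 / ε < N := lt_of_le_of_lt (le_max_right _ _) hNgt
    rw [div_lt_iff₀ hε] at h3
    rw [div_lt_iff₀ hNR]
    nlinarith
  obtain ⟨kn, hkn, hlabn⟩ := hfull n (by omega)
  refine ⟨pt (V b l kn), hvcube kn, ?_⟩
  intro i
  have hSempty : ¬ (S (V b l kn)).Nonempty := by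
    intro h
    have := (hlab_lt _ h).2
    omega
  have hlow : pt (V b l kn) i ≤ f (pt (V b l kn)) i := by
    by_cases hz : V b l kn i = 0
    · have hz2 : pt (V b l kn) i = 0 := by
        show ((V b l kn i : ℕ) : ℝ) / N = 0
        rw [hz]
        simp
      rw [hz2]
      exact (hmap (hvcube kn) i).1
    · by_contra hc
      push_neg at hc
      exact hSempty ⟨i.val, i.isLt, by omega, le_of_lt hc⟩
  obtain ⟨kj, hkj, hlabj⟩ := hfull i.val (by omega)
  have hne : (S (V b l kj)).Nonempty := by
    by_contra h
    have hE : lab (V b l kj) = n := by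
      show (if h : (S (V b l kj)).Nonempty then sInf (S (V b l kj)) else n) = n
      rw [dif_neg h]
    rw [hlabj] at hE
    have := i.isLt
    omega
  obtain ⟨hmemS, -⟩ := hlab_lt _ hne
  rw [hlabj] at hmemS
  obtain ⟨hj2, hpos2, hle2⟩ := hmemS
  have hfd : dist (f (pt (V b l kn))) (f (pt (V b l kj))) < ε/2 :=
    hδ _ (hvcube kn) _ (hvcube kj) (hvdist kn kj)
  have hcoordf : |f (pt (V b l kn)) i - f (pt (V b l kj)) i|
      ≤ dist (f (pt (V b l kn))) (f (pt (V b l kj))) := coord_le_dist _ _ i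
  have hcoordp : |pt (V b l kj) i - pt (V b l kn) i| ≤ 1/N := hprox kj kn i
  have e1 : f (pt (V b l kn)) i - f (pt (V b l kj)) i ≤ ε/2 :=
    le_of_lt (lt_of_le_of_lt (le_trans (le_abs_self _) hcoordf) hfd)
  have e2 : f (pt (V b l kj)) i ≤ pt (V b l kj) i := hle2
  have e3 : pt (V b l kj) i - pt (V b l kn) i ≤ 1/N := le_trans (le_abs_self _) hcoordp
  rw [abs_le]
  constructor
  · linarith
  · linarith

theorem brouwer_cube {n : ℕ} (f : EuclideanSpace ℝ (Fin n) → EuclideanSpace ℝ (Fin n))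
    (hf : Continuous f) (hmap : Set.MapsTo f (cube n) (cube n)) :
    ∃ x ∈ cube n, f x = x := by
  have hcont : ContinuousOn (fun x => dist (f x) x) (cube n) :=
    (hf.dist continuous_id).continuousOn
  obtain ⟨x₀, hx₀, hmin⟩ := cube_compact.exists_isMinOn ⟨0, zero_mem_cube⟩ hcont
  rw [isMinOn_iff] at hmin
  refine ⟨x₀, hx₀, ?_⟩
  have hle : ∀ ε : ℝ, 0 < ε → dist (f x₀) x₀ ≤ Real.sqrt n * ε := by
    intro ε hε
    obtain ⟨x, hx, hxe⟩ := cube_approx_fixed f hf hmap hε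
    calc dist (f x₀) x₀ ≤ dist (f x) x := hmin x hx
      _ ≤ Real.sqrt n * ε := dist_le_of_coord_le (le_of_lt hε) (fun i => hxe i)
  have h0 : dist (f x₀) x₀ ≤ 0 := by
    by_contra hc
    push_neg at hc
    have hsn : (0:ℝ) ≤ Real.sqrt n := Real.sqrt_nonneg _
    have h1 := hle (dist (f x₀) x₀ / (2 * (Real.sqrt n + 1))) (by positivity)
    have hlt : Real.sqrt n * (dist (f x₀) x₀ / (2 * (Real.sqrt n + 1))) < dist (f x₀) x₀ := by
      rw [mul_div_assoc', div_lt_iff₀ (by positivity)]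
      nlinarith
    linarith
  exact dist_le_zero.1 h0

theorem exists_proj {n : ℕ} (Δ : Set (EuclideanSpace ℝ (Fin n))) (hne : Δ.Nonempty)
    (hcp : IsCompact Δ) (hcv : Convex ℝ Δ) :
    ∃ P : EuclideanSpace ℝ (Fin n) → EuclideanSpace ℝ (Fin n),
      Continuous P ∧ (∀ u, P u ∈ Δ) ∧
        ∀ u, ∀ w ∈ Δ, inner ℝ (u - P u) (w - P u) ≤ (0:ℝ) := by
  have hcomp : IsComplete Δ := hcp.isClosed.isComplete
  choose P hPmem hPnorm using exists_norm_eq_iInf_of_complete_convex hne hcomp hcv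
  have hchar : ∀ u, ∀ w ∈ Δ, inner ℝ (u - P u) (w - P u) ≤ (0:ℝ) := fun u =>
    (norm_eq_iInf_iff_real_inner_le_zero hcv (hPmem u)).1 (hPnorm u)
  refine ⟨P, ?_, hPmem, hchar⟩
  have hlip : ∀ u v, ‖P u - P v‖ ≤ ‖u - v‖ := by
    intro u v
    have h1 : inner ℝ (u - P u) (P v - P u) ≤ (0:ℝ) := hchar u (P v) (hPmem v)
    have h2 : inner ℝ (v - P v) (P u - P v) ≤ (0:ℝ) := hchar v (P u) (hPmem u)
    have h1' : (0:ℝ) ≤ inner ℝ (u - P u) (P u - P v) := by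
      have : P v - P u = -(P u - P v) := by abel
      rw [this, inner_neg_right] at h1
      linarith
    have key : ‖P u - P v‖^2 ≤ inner ℝ (u - v) (P u - P v) := by
      have hsplit : u - v = ((u - P u) - (v - P v)) + (P u - P v) := by abel
      have : (inner ℝ (u - v) (P u - P v) : ℝ)
          = (inner ℝ (u - P u) (P u - P v) : ℝ) - (inner ℝ (v - P v) (P u - P v) : ℝ)
            + (inner ℝ (P u - P v) (P u - P v) : ℝ) := by
        rw [hsplit, inner_add_left, inner_sub_left]
      rw [this, real_inner_self_eq_norm_sq]
      linarith
    have hub : inner ℝ (u - v) (P u - P v) ≤ ‖u - v‖ * ‖P u - P v‖ :=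
      real_inner_le_norm _ _
    rcases eq_or_lt_of_le (norm_nonneg (P u - P v)) with h | h
    · rw [← h]
      exact norm_nonneg _
    · nlinarith
  have : LipschitzWith 1 P := by
    apply LipschitzWith.of_dist_le_mul
    intro x y
    rw [dist_eq_norm, dist_eq_norm, NNReal.coe_one, one_mul]
    exact hlip x y
  exact this.continuous

end VIB

open RealInnerProductSpace

/-- Existence of a solution of VI(F, Δ) on a nonempty compact convex set. -/
theorem stmt_5 {n : ℕ} (F : EuclideanSpace ℝ (Fin n) → EuclideanSpace ℝ (Fin n))
    (Δ : Set (EuclideanSpace ℝ (Fin n))) (hne : Δ.Nonempty) (hcp : IsCompact Δ)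
    (hcv : Convex ℝ Δ) (hF : Continuous F) :
    ∃ x' ∈ Δ, ∀ x ∈ Δ, 0 ≤ ⟪F x', x - x'⟫ := by
  classical
  obtain ⟨P, hPc, hPmem, hchar⟩ := VIB.exists_proj Δ hne hcp hcv
  obtain ⟨r, hr⟩ := hcp.isBounded.subset_closedBall 0
  set R : ℝ := max r 1 with hR
  have hR1 : (1:ℝ) ≤ R := le_max_right r 1
  have hR0 : (0:ℝ) < R := lt_of_lt_of_le one_pos hR1
  have hΔR : ∀ x ∈ Δ, ∀ i, |x i| ≤ R := by
    intro x hx i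
    have h1 : dist x 0 ≤ r := Metric.mem_closedBall.1 (hr hx)
    have h2 : |x i - (0 : EuclideanSpace ℝ (Fin n)) i| ≤ dist x 0 := VIB.coord_le_dist x 0 i
    have h3 : (0 : EuclideanSpace ℝ (Fin n)) i = 0 := rfl
    rw [h3, sub_zero] at h2
    calc |x i| ≤ r := le_trans h2 h1
      _ ≤ R := le_max_left r 1
  set c : EuclideanSpace ℝ (Fin n) := WithLp.toLp 2 (fun _ => R) with hc
  set φ : EuclideanSpace ℝ (Fin n) → EuclideanSpace ℝ (Fin n) :=
    fun x => (2*R) • x - c with hφ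
  set ψ : EuclideanSpace ℝ (Fin n) → EuclideanSpace ℝ (Fin n) :=
    fun y => (1/(2*R)) • (y + c) with hψ
  have hφψ : ∀ y, φ (ψ y) = y := by
    intro y
    show (2*R) • ((1/(2*R)) • (y + c)) - c = y
    rw [smul_smul, mul_one_div, div_self (by positivity), one_smul]
    abel
  set f : EuclideanSpace ℝ (Fin n) → EuclideanSpace ℝ (Fin n) :=
    fun x => P (x - F x) with hf'
  have hfc : Continuous f := hPc.comp (continuous_id.sub hF)
  have hfΔ : ∀ x, f x ∈ Δ := fun x => hPmem _
  set g : EuclideanSpace ℝ (Fin n) → EuclideanSpace ℝ (Fin n) :=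
    fun x => ψ (f (φ x)) with hg'
  have hψc : Continuous ψ := by
    show Continuous fun y => (1/(2*R)) • (y + c)
    fun_prop
  have hφc : Continuous φ := by
    show Continuous fun x => (2*R) • x - c
    fun_prop
  have hgc : Continuous g := hψc.comp (hfc.comp hφc)
  have hgmap : Set.MapsTo g (VIB.cube n) (VIB.cube n) := by
    intro x _
    have hfm : f (φ x) ∈ Δ := hfΔ _
    intro i
    have hcoord : |f (φ x) i| ≤ R := hΔR _ hfm i
    have habs := abs_le.1 hcoord
    have hgi : g x i = (1/(2*R)) * (f (φ x) i + R) := rfl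
    rw [hgi]
    constructor
    · apply mul_nonneg (by positivity)
      linarith
    · have h2 : (1/(2*R)) * (f (φ x) i + R) ≤ (1/(2*R)) * (2*R) :=
        mul_le_mul_of_nonneg_left (by linarith) (by positivity)
      rwa [one_div_mul_cancel (by positivity : (2*R:ℝ) ≠ 0)] at h2
  obtain ⟨x₀, hx₀c, hx₀⟩ := VIB.brouwer_cube g hgc hgmap
  have hfix : f (φ x₀) = φ x₀ := by
    have h1 := congrArg φ hx₀
    rw [hφψ] at h1
    exact h1
  refine ⟨φ x₀, hfix ▸ hfΔ (φ x₀), ?_⟩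
  intro x hx
  have h := hchar (φ x₀ - F (φ x₀)) x hx
  have hPeq : P (φ x₀ - F (φ x₀)) = φ x₀ := hfix
  rw [hPeq] at h
  have hsimp : φ x₀ - F (φ x₀) - φ x₀ = -(F (φ x₀)) := by abel
  rw [hsimp, inner_neg_left] at h
  linarith
end

section
/- Let g: ℝⁿ → ℝ be convex and differentiable, and let λ_a, λ_b ≥ 0 be real numbers and x_a, x_b ∈ ℝⁿ. Then (x_a − x_b)ᵀ(λ_a ∇g(x_a) − λ_b ∇g(x_b)) − (λ_a − λ_b)(g(x_a) − g(x_b)) ≥ 0. -/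
open RealInnerProductSpace

/-- Restricting `f` to the segment from `x` to `y` reduces this to the one-variable fact that a
convex function lies above its tangent line. -/
theorem ConvexOn.fderiv_sub_le {E : Type*} [NormedAddCommGroup E] [NormedSpace ℝ E]
    {s : Set E} {f : E → ℝ} {f' : E →L[ℝ] ℝ} {x y : E} (hf : ConvexOn ℝ s f)
    (hx : x ∈ s) (hy : y ∈ s) (hf' : HasFDerivAt f f' x) :
    f' (y - x) ≤ f y - f x := by
  set L : ℝ →ᵃ[ℝ] E := AffineMap.lineMap x y
  have hL : ∀ t : ℝ, L t = t • (y - x) + x := fun t => AffineMap.lineMap_apply x y t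
  have hφ : HasDerivAt (f ∘ L) (f' (y - x)) 0 := by
    have hline : HasDerivAt L (y - x) 0 := by
      simpa [funext hL] using ((hasDerivAt_id (0 : ℝ)).smul_const (y - x)).add_const x
    exact (by simpa [L] using hf' : HasFDerivAt f f' (L 0)).comp_hasDerivAt 0 hline
  have h := (hf.comp_affineMap L).le_slope_of_hasDerivAt (x := 0) (y := 1)
    (by simpa [L] using hx) (by simpa [L] using hy) one_pos hφ
  simpa [slope_def_field, L] using h

theorem ConvexOn.inner_gradient_sub_le {F : Type*} [NormedAddCommGroup F]
    [InnerProductSpace ℝ F] [CompleteSpace F] {s : Set F} {f : F → ℝ} {f' x y : F}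
    (hf : ConvexOn ℝ s f) (hx : x ∈ s) (hy : y ∈ s) (hf' : HasGradientAt f f' x) :
    ⟪f', y - x⟫ ≤ f y - f x := by
  simpa using hf.fderiv_sub_le hx hy hf'.hasFDerivAt

/-- Single-constraint KKT monotonicity inequality. -/
theorem stmt_11 {n : ℕ} (g : EuclideanSpace ℝ (Fin n) → ℝ)
    (G : EuclideanSpace ℝ (Fin n) → EuclideanSpace ℝ (Fin n))
    (hgconv : ConvexOn ℝ Set.univ g)
    (hggrad : ∀ x, HasGradientAt g (G x) x)
    (lama lamb : ℝ) (hla : 0 ≤ lama) (hlb : 0 ≤ lamb)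
    (xa xb : EuclideanSpace ℝ (Fin n)) :
    0 ≤ ⟪xa - xb, lama • G xa - lamb • G xb⟫ - (lama - lamb) * (g xa - g xb) := by
  have ha := hgconv.inner_gradient_sub_le (y := xb) trivial trivial (hggrad xa)
  have hb := hgconv.inner_gradient_sub_le (y := xa) trivial trivial (hggrad xb)
  rw [← neg_sub, inner_neg_right] at ha
  rw [inner_sub_right, real_inner_smul_right, real_inner_smul_right,
    real_inner_comm (G xa), real_inner_comm (G xb)]
  linear_combination lama * ha + lamb * hb
end

section
/- Let Ω ⊆ ℝⁿ be nonempty closed convex, F: ℝⁿ → ℝⁿ continuous, and consider the differential equation ẋ(t) = P_Ω[x(t) − F(x(t))] − x(t). If x(0) ∈ Ω, then x(t) ∈ Ω for all t ≥ 0. -/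
/-!
Along the trajectory, `d t = infDist (x t) Ω` is nonincreasing. Since `x t + ẋ t ∈ Ω`, convexity
gives `infDist (x t + h • ẋ t) Ω ≤ (1 - h) * d t` for `h ∈ [0, 1]`; as `infDist · Ω` is
1-Lipschitz and `x (t + h) = x t + h • ẋ t + o(h)`, the right Dini derivative of `d` is `≤ 0`. Hence `d ≤ d 0 = 0` on `[0, ∞)`,
and closedness of `Ω` gives `x t ∈ Ω`.
-/

open RealInnerProductSpace

open Metric Set Filter Topology

section

variable {E : Type*} [NormedAddCommGroup E] [NormedSpace ℝ E] {s : Set E}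

theorem Convex.infDist_add_smul_le (hs : Convex ℝ s) {y v : E} (hv : y + v ∈ s) {h : ℝ}
    (h0 : 0 ≤ h) (h1 : h ≤ 1) : infDist (y + h • v) s ≤ (1 - h) * infDist y s := by
  refine le_of_forall_pos_lt_add fun ε hε => ?_
  obtain ⟨p, hp, hyp⟩ := (infDist_lt_iff ⟨_, hv⟩).1 (lt_add_of_pos_right (infDist y s) hε)
  have hmem : (1 - h) • p + h • (y + v) ∈ s := hs hp hv (by linarith) h0 (by ring)
  have hdist : dist (y + h • v) ((1 - h) • p + h • (y + v)) = (1 - h) * dist y p := by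
    rw [dist_eq_norm, dist_eq_norm, ← norm_smul_of_nonneg (sub_nonneg.2 h1)]
    congr 1
    module
  have hd : infDist y s ≤ dist y p := infDist_le_dist_of_mem hp
  calc infDist (y + h • v) s ≤ (1 - h) * dist y p := hdist ▸ infDist_le_dist_of_mem hmem
    _ < (1 - h) * infDist y s + ε := by nlinarith

theorem Convex.eventually_slope_infDist_lt (hs : Convex ℝ s) {x : ℝ → E} {t : ℝ} {v : E}
    (hv : x t + v ∈ s) (hx : HasDerivWithinAt x v (Ici t) t) {r : ℝ} (hr : 0 < r) :
    ∀ᶠ z in 𝓝[>] t, slope (fun τ => infDist (x τ) s) t z < r := by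
  have hsmall : ∀ᶠ z in 𝓝[>] t, ‖x z - x t - (z - t) • v‖ ≤ r / 2 * ‖z - t‖ :=
    (hx.mono Ioi_subset_Ici_self).isLittleO.def (half_pos hr)
  filter_upwards [hsmall, Ioo_mem_nhdsGT (lt_add_one t)] with z hz ⟨hzt, hz1⟩
  have hh : 0 < z - t := sub_pos.2 hzt
  have hstep := hs.infDist_add_smul_le hv hh.le (by linarith)
  have hlip := infDist_le_infDist_add_dist (x := x z) (y := x t + (z - t) • v) (s := s)
  have hdist : dist (x z) (x t + (z - t) • v) ≤ r / 2 * (z - t) := by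
    rw [dist_eq_norm, ← sub_sub]
    rwa [Real.norm_of_nonneg hh.le] at hz
  have hd : 0 ≤ infDist (x t) s := infDist_nonneg
  rw [slope_def_field, div_lt_iff₀ hh]
  nlinarith

theorem Convex.mem_of_hasDerivAt_of_add_mem (hs : Convex ℝ s) (hcl : IsClosed s)
    {x v : ℝ → E} (hx : ∀ t, 0 ≤ t → HasDerivAt x (v t) t) (hv : ∀ t, 0 ≤ t → x t + v t ∈ s)
    (h0 : x 0 ∈ s) {T : ℝ} (hT : 0 ≤ T) : x T ∈ s := by
  have hcont : ContinuousOn (fun t => infDist (x t) s) (Icc 0 T) := fun t ht =>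
    ((continuous_infDist_pt s).continuousAt.comp (hx t ht.1).continuousAt).continuousWithinAt
  have hle : infDist (x T) s ≤ 0 :=
    image_le_of_liminf_slope_right_le_deriv_boundary hcont (B := 0) (B' := 0)
      (infDist_zero_of_mem h0).le continuousOn_const
      (fun _ _ => hasDerivWithinAt_const _ _ _)
      (fun t ht r hr => (hs.eventually_slope_infDist_lt (hv t ht.1)
        (hx t ht.1).hasDerivWithinAt hr).frequently) ⟨hT, le_rfl⟩
  exact (hcl.mem_iff_infDist_zero ⟨_, h0⟩).2 (le_antisymm hle infDist_nonneg)

end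

theorem stmt_17_general {n : ℕ} (Ω : Set (EuclideanSpace ℝ (Fin n)))
    (hcl : IsClosed Ω) (hcv : Convex ℝ Ω)
    (P : EuclideanSpace ℝ (Fin n) → EuclideanSpace ℝ (Fin n))
    (hP : ∀ x, P x ∈ Ω ∧ ∀ z ∈ Ω, ‖x - P x‖ ≤ ‖x - z‖)
    (F : EuclideanSpace ℝ (Fin n) → EuclideanSpace ℝ (Fin n))
    (x : ℝ → EuclideanSpace ℝ (Fin n))
    (hode : ∀ t, 0 ≤ t → HasDerivAt x (P (x t - F (x t)) - x t) t)
    (hinit : x 0 ∈ Ω) :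
    ∀ t, 0 ≤ t → x t ∈ Ω := fun _ ht =>
  hcv.mem_of_hasDerivAt_of_add_mem hcl hode
    (fun τ _ => (add_sub_cancel (x τ) _).symm ▸ (hP _).1) hinit ht

/-- Forward invariance of Ω under the projected dynamical system ẋ = P_Ω[x − F(x)] − x. -/
theorem stmt_17 {n : ℕ} (Ω : Set (EuclideanSpace ℝ (Fin n)))
    (hne : Ω.Nonempty) (hcl : IsClosed Ω) (hcv : Convex ℝ Ω)
    (P : EuclideanSpace ℝ (Fin n) → EuclideanSpace ℝ (Fin n))
    (hP : ∀ x, P x ∈ Ω ∧ ∀ z ∈ Ω, ‖x - P x‖ ≤ ‖x - z‖)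
    (F : EuclideanSpace ℝ (Fin n) → EuclideanSpace ℝ (Fin n)) (hF : Continuous F)
    (x : ℝ → EuclideanSpace ℝ (Fin n))
    (hode : ∀ t, 0 ≤ t → HasDerivAt x (P (x t - F (x t)) - x t) t)
    (hinit : x 0 ∈ Ω) :
    ∀ t, 0 ≤ t → x t ∈ Ω :=
  stmt_17_general Ω hcl hcv P hP F x hode hinit
end
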